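/- arXiv:2506.11547 — 3 statements merged into one kernel-verified Lean document; each statement's English description precedes it below -/
import Mathlib

section
/- With M as above (for unit vectors a, b ∈ ℝ³), the vector (0, a - b) ∈ ℝ⁴ satisfies M(0, a-b) = -(0, a-b), i.e., it is an eigenvector of M with eigenvalue -1 (when a ≠ b). -/
open Matrix

/-- Left-multiplication matrix of the pure quaternion `a`. -/
def Lmat (a : Fin 3 → ℝ) : Matrix (Fin 4) (Fin 4) ℝ :=
  !![0, -a 0, -a 1, -a 2;
     a 0, 0, a 2, -a 1;
     a 1, -a 2, 0, a 0;
     a 2, a 1, -a 0, 0]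

/-- Right-multiplication matrix of the pure quaternion `b`. -/
def Rmat (b : Fin 3 → ℝ) : Matrix (Fin 4) (Fin 4) ℝ :=
  !![0, -b 0, -b 1, -b 2;
     b 0, 0, -b 2, b 1;
     b 1, b 2, 0, -b 0;
     b 2, -b 1, b 0, 0]

/-- The symmetric matrix `M = L(a)ᵀ · R(b)` of the quaternion formulation. -/
def Mquat (a b : Fin 3 → ℝ) : Matrix (Fin 4) (Fin 4) ℝ := (Lmat a)ᵀ * Rmat b

/-- for unit vectors `a ≠ b`, the vector `(0, a - b) ∈ ℝ⁴` is an
eigenvector of `M` with eigenvalue `-1`. -/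
theorem Mquat_eigenvector_neg_one (a b : Fin 3 → ℝ)
    (ha : a ⬝ᵥ a = 1) (hb : b ⬝ᵥ b = 1) (hne : a ≠ b) :
    let v : Fin 4 → ℝ := ![0, (a - b) 0, (a - b) 1, (a - b) 2]
    (Mquat a b).mulVec v = -v ∧ v ≠ 0 := by
  intro v
  have ha' : a 0 * a 0 + a 1 * a 1 + a 2 * a 2 = 1 := by
    simpa [dotProduct, Fin.sum_univ_three] using ha
  have hb' : b 0 * b 0 + b 1 * b 1 + b 2 * b 2 = 1 := by
    simpa [dotProduct, Fin.sum_univ_three] using hb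
  constructor
  · funext i
    fin_cases i
    · simp [v, Mquat, Lmat, Rmat, mulVec, dotProduct, Fin.sum_univ_succ,
        Matrix.mul_apply, Pi.sub_apply]
      ring
    · simp only [v, Mquat, Lmat, Rmat, mulVec, dotProduct, Fin.sum_univ_succ,
        Matrix.mul_apply, Pi.sub_apply, Pi.neg_apply, Fin.sum_univ_zero]
      simp [Fin.sum_univ_succ]
      linear_combination (b 0) * ha' - (a 0) * hb'
    · simp only [v, Mquat, Lmat, Rmat, mulVec, dotProduct, Fin.sum_univ_succ,
        Matrix.mul_apply, Pi.sub_apply, Pi.neg_apply, Fin.sum_univ_zero]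
      simp [Fin.sum_univ_succ]
      linear_combination (b 1) * ha' - (a 1) * hb'
    · simp only [v, Mquat, Lmat, Rmat, mulVec, dotProduct, Fin.sum_univ_succ,
        Matrix.mul_apply, Pi.sub_apply, Pi.neg_apply, Fin.sum_univ_zero]
      simp [Fin.sum_univ_succ]
      linear_combination (b 2) * ha' - (a 2) * hb'
  · intro h
    apply hne
    funext i
    have h1 := congrFun h 1
    have h2 := congrFun h 2
    have h3 := congrFun h 3
    simp [v, Pi.sub_apply, sub_eq_zero] at h1 h2 h3
    fin_cases i <;> assumption
end

section
/- With M as above (for unit vectors a, b ∈ ℝ³), the vector (0, a + b) ∈ ℝ⁴ satisfies M(0, a+b) = (0, a+b), i.e., it is an eigenvector of M with eigenvalue 1 (when a ≠ -b). -/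
open Matrix

/-- for unit vectors `a ≠ -b`, the vector `(0, a + b) ∈ ℝ⁴` is an
eigenvector of `M` with eigenvalue `1`. -/
theorem Mquat_eigenvector_one (a b : Fin 3 → ℝ)
    (ha : a ⬝ᵥ a = 1) (hb : b ⬝ᵥ b = 1) (hne : a ≠ -b) :
    let v : Fin 4 → ℝ := ![0, (a + b) 0, (a + b) 1, (a + b) 2]
    (Mquat a b).mulVec v = v ∧ v ≠ 0 := by
  intro v
  have ha' : a 0 * a 0 + a 1 * a 1 + a 2 * a 2 = 1 := by
    simpa [dotProduct, Fin.sum_univ_three] using ha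
  have hb' : b 0 * b 0 + b 1 * b 1 + b 2 * b 2 = 1 := by
    simpa [dotProduct, Fin.sum_univ_three] using hb
  constructor
  · funext i
    fin_cases i <;>
      simp [v, Mquat, Lmat, Rmat, mulVec, dotProduct, Matrix.mul_apply,
        Matrix.transpose_apply, Fin.sum_univ_four, Pi.add_apply,
        Matrix.vecHead, Matrix.vecTail, Function.comp]
    · ring
    · linear_combination b 0 * ha' + a 0 * hb'
    · linear_combination b 1 * ha' + a 1 * hb'
    · linear_combination b 2 * ha' + a 2 * hb'
  · intro h
    apply hne
    funext i
    have h1 := congrFun h 1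
    have h2 := congrFun h 2
    have h3 := congrFun h 3
    simp [v, Pi.add_apply] at h1 h2 h3
    fin_cases i <;> simp <;> linarith
end

section
/- The characteristic polynomial of M (for unit vectors a, b ∈ ℝ³) is (λ² - 1)², so the eigenvalues of M are exactly 1 and -1, each with multiplicity 2. -/
open Matrix

open Polynomial in
set_option maxHeartbeats 2000000 in
lemma Mquat_charpoly_aux (a b : Fin 3 → ℝ)
    (ha : a ⬝ᵥ a = 1) (hb : b ⬝ᵥ b = 1) :
    (Mquat a b).charpoly = (Polynomial.X ^ 2 - 1) ^ 2 := by
  have hL : (Lmat a)ᵀ = !![0, a 0, a 1, a 2;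
     -a 0, 0, -a 2, a 1;
     -a 1, a 2, 0, -a 0;
     -a 2, -a 1, a 0, 0] := by
    ext i j
    fin_cases i <;> fin_cases j <;> simp [Lmat]
  have hM : Mquat a b = !![
      a 0*b 0 + a 1*b 1 + a 2*b 2, a 1*b 2 - a 2*b 1, a 2*b 0 - a 0*b 2, a 0*b 1 - a 1*b 0;
      a 1*b 2 - a 2*b 1, a 0*b 0 - a 1*b 1 - a 2*b 2, a 0*b 1 + a 1*b 0, a 0*b 2 + a 2*b 0;
      a 2*b 0 - a 0*b 2, a 0*b 1 + a 1*b 0, a 1*b 1 - a 0*b 0 - a 2*b 2, a 1*b 2 + a 2*b 1;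
      a 0*b 1 - a 1*b 0, a 0*b 2 + a 2*b 0, a 1*b 2 + a 2*b 1, a 2*b 2 - a 0*b 0 - a 1*b 1] := by
    rw [Mquat, hL, Rmat]
    ext i j
    fin_cases i <;> fin_cases j <;>
      simp [Matrix.mul_apply, Fin.sum_univ_four] <;> ring
  have hCM : charmatrix (Mquat a b) = !![
      X - C (a 0*b 0 + a 1*b 1 + a 2*b 2), -C (a 1*b 2 - a 2*b 1), -C (a 2*b 0 - a 0*b 2), -C (a 0*b 1 - a 1*b 0);
      -C (a 1*b 2 - a 2*b 1), X - C (a 0*b 0 - a 1*b 1 - a 2*b 2), -C (a 0*b 1 + a 1*b 0), -C (a 0*b 2 + a 2*b 0);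
      -C (a 2*b 0 - a 0*b 2), -C (a 0*b 1 + a 1*b 0), X - C (a 1*b 1 - a 0*b 0 - a 2*b 2), -C (a 1*b 2 + a 2*b 1);
      -C (a 0*b 1 - a 1*b 0), -C (a 0*b 2 + a 2*b 0), -C (a 1*b 2 + a 2*b 1), X - C (a 2*b 2 - a 0*b 0 - a 1*b 1)] := by
    rw [hM]
    ext i j
    fin_cases i <;> fin_cases j <;> simp [charmatrix_apply_eq, charmatrix_apply_ne]
  have hs : (a 0^2 + a 1^2 + a 2^2) * (b 0^2 + b 1^2 + b 2^2) = 1 := by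
    have ha' : a 0 ^ 2 + a 1 ^ 2 + a 2 ^ 2 = 1 := by
      simpa [dotProduct, Fin.sum_univ_three, sq] using ha
    have hb' : b 0 ^ 2 + b 1 ^ 2 + b 2 ^ 2 = 1 := by
      simpa [dotProduct, Fin.sum_univ_three, sq] using hb
    rw [ha', hb', one_mul]
  have hC1 : ((C (a 0))^2 + (C (a 1))^2 + (C (a 2))^2) * ((C (b 0))^2 + (C (b 1))^2 + (C (b 2))^2)
      = (1 : Polynomial ℝ) := by
    have := congrArg (C : ℝ →+* Polynomial ℝ) hs
    simpa [_root_.map_add, _root_.map_mul, _root_.map_pow] using this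
  rw [Matrix.charpoly, hCM]
  rw [Matrix.det_succ_row_zero]
  simp [Fin.sum_univ_succ, Matrix.det_fin_three, Fin.succAbove, _root_.map_add, _root_.map_sub, _root_.map_mul,
    show (Fin.succ 2 : Fin 4) = 3 from rfl, show (Fin.succ 1 : Fin 4) = 2 from rfl,
    show (Fin.succ 0 : Fin 4) = 1 from rfl, show (Fin.succ 1 : Fin 3) = 2 from rfl,
    show (Fin.succ 0 : Fin 3) = 1 from rfl, show ((1:Fin 4) < 3) = True from by decide,
    show ((1:Fin 4) < 2) = True from by decide, show ((2:Fin 4) < 3) = True from by decide,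
    show (Fin.castSucc 2 : Fin 4) = 2 from rfl, show (Fin.castSucc 1 : Fin 4) = 1 from rfl,
    show (Fin.castSucc 0 : Fin 4) = 0 from rfl, show (Fin.castSucc 1 : Fin 3) = 1 from rfl,
    show (Fin.castSucc 0 : Fin 3) = 0 from rfl]
  linear_combination ((C (a 0))^2 + (C (a 1))^2 + (C (a 2))^2) * ((C (b 0))^2 + (C (b 1))^2 + (C (b 2))^2) * hC1 + hC1 - 2*X^2 * hC1

open Polynomial in
lemma roots_sq_sub_one_sq : (((X:Polynomial ℝ) ^ 2 - 1) ^ 2).roots = {1, 1, -1, -1} := by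
  have hf : ((X:Polynomial ℝ) ^ 2 - 1) ^ 2 = (X - C 1) ^ 2 * (X - C (-1)) ^ 2 := by
    simp only [_root_.map_one, _root_.map_neg]; ring
  rw [hf, roots_mul (mul_ne_zero (pow_ne_zero _ (X_sub_C_ne_zero 1))
      (pow_ne_zero _ (X_sub_C_ne_zero (-1)))), roots_pow, roots_pow, roots_X_sub_C,
      roots_X_sub_C]
  rfl

/-- the characteristic polynomial of `M` is `(λ² - 1)²`, so the
eigenvalues of `M` are exactly `1` and `-1`, each with multiplicity 2. -/
theorem Mquat_charpoly (a b : Fin 3 → ℝ)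
    (ha : a ⬝ᵥ a = 1) (hb : b ⬝ᵥ b = 1) :
    (Mquat a b).charpoly = (Polynomial.X ^ 2 - 1) ^ 2 ∧
    (Mquat a b).charpoly.roots = {1, 1, -1, -1} := by
  have h := Mquat_charpoly_aux a b ha hb
  exact ⟨h, by rw [h]; exact roots_sq_sub_one_sq⟩
end
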